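/- Let V be a nonzero finite-dimensional vector space over a field K equipped with a separated and exhaustive ℝ-filtration. For any basis e = (e_1, …, e_n) of V (written as a column vector), there exists an upper triangular matrix A ∈ M_{n×n}(K) with all diagonal entries equal to 1 such that the basis A·e is a maximal basis of V. -/

import Mathlib

open MeasureTheory
open scoped ENNReal

/-- The index function of an `ℝ`-filtration `F` of a vector space `V`:
`λ(x) = sup {r ∈ ℝ : x ∈ F r}` in `ℝ ∪ {±∞}`, with `sup ∅ = -∞`. -/
noncomputable def filtIndex {K V : Type*} [Field K] [AddCommGroup V] [Module K V]
    (F : ℝ → Submodule K V) (x : V) : EReal :=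
  sSup ((fun r : ℝ => (r : EReal)) '' {r : ℝ | x ∈ F r})

/-- The Borel probability measure `ν_e = (1/n) ∑ᵢ δ_{λ(eᵢ)}` on `ℝ` associated to a
family `e = (e₁, …, e_n)` of vectors of a filtered vector space. -/
noncomputable def basisMeasure {K V : Type*} [Field K] [AddCommGroup V] [Module K V]
    {n : ℕ} (F : ℝ → Submodule K V) (e : Fin n → V) : Measure ℝ :=
  (n : ℝ≥0∞)⁻¹ • ∑ i : Fin n, Measure.dirac ((filtIndex F (e i)).toReal)

/-- `μ ⪰ ν` : for every bounded increasing function `f : ℝ → ℝ`, `∫ f dν ≤ ∫ f dμ`. -/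
def MeasureRightOf (μ ν : Measure ℝ) : Prop :=
  ∀ f : ℝ → ℝ, Monotone f → (∃ C : ℝ, ∀ x, |f x| ≤ C) →
    ∫ x, f x ∂ν ≤ ∫ x, f x ∂μ

/-- A basis `e` of `V` is maximal if `ν_e ⪰ ν_{e'}` for every basis `e'` of `V`. -/
def MaximalBasis {K V : Type*} [Field K] [AddCommGroup V] [Module K V]
    {n : ℕ} (F : ℝ → Submodule K V) (e : Module.Basis (Fin n) K V) : Prop :=
  ∀ e' : Module.Basis (Fin n) K V, MeasureRightOf (basisMeasure F ⇑e) (basisMeasure F ⇑e')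

/-!
For each `i`, pick `e' i` of maximal index `λ` in the affine space `e i + span {e j | i < j}`;
this is possible because `λ` takes only finitely many values, `F` being a chain of subspaces of
a finite-dimensional space. Rescaling any `x` so that its leading `e'`-coordinate (the one of
least index `i`) is `1` puts it in that affine space, hence `λ x ≤ λ (e' i)`. It follows that the
superlevel subspace `{x | t ≤ λ x}` is spanned by the `e' i` with `t ≤ λ (e' i)`, so for every `t`
no basis has more vectors of index `≥ t` than `e'`. Sorting the indices turns these counts into
`∫ f dν_b ≤ ∫ f dν_{e'}` for every increasing `f`.
-/

open Module Submodule Finset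

noncomputable def filtIndexGe {K V : Type*} [Field K] [AddCommGroup V] [Module K V]
    (F : ℝ → Submodule K V) (t : ℝ) : Submodule K V :=
  ⨅ (s : ℝ) (_ : s < t), F s

section FiltIndex

variable {K V : Type*} [Field K] [AddCommGroup V] [Module K V] {F : ℝ → Submodule K V}

lemma mem_of_coe_lt_filtIndex (hF : Antitone F) {x : V} {s : ℝ}
    (h : (s : EReal) < filtIndex F x) : x ∈ F s := by
  obtain ⟨_, ⟨r, hr, rfl⟩, hsr⟩ := lt_sSup_iff.mp h
  exact hF (EReal.coe_lt_coe_iff.mp hsr).le hr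

lemma coe_le_filtIndex_of_forall_lt {x : V} {t : ℝ} (h : ∀ s < t, x ∈ F s) :
    (t : EReal) ≤ filtIndex F x := by
  refine le_of_forall_lt fun c hc => ?_
  obtain ⟨s, hcs, hst⟩ := EReal.exists_between_coe_real hc
  exact hcs.trans_le (le_sSup ⟨s, h s (EReal.coe_lt_coe_iff.mp hst), rfl⟩)

lemma mem_filtIndexGe_iff (hF : Antitone F) {t : ℝ} {x : V} :
    x ∈ filtIndexGe F t ↔ (t : EReal) ≤ filtIndex F x := by
  simp only [filtIndexGe, mem_iInf]
  exact ⟨coe_le_filtIndex_of_forall_lt,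
    fun h s hs => mem_of_coe_lt_filtIndex hF ((EReal.coe_lt_coe_iff.mpr hs).trans_le h)⟩

lemma filtIndex_smul (F : ℝ → Submodule K V) {c : K} (hc : c ≠ 0) (x : V) :
    filtIndex F (c • x) = filtIndex F x := by
  simp only [filtIndex, smul_mem_iff _ hc]

lemma filtIndex_ne_top (hF : Antitone F) (hsep : (⋂ r : ℝ, (F r : Set V)) = {0}) {x : V}
    (hx : x ≠ 0) : filtIndex F x ≠ ⊤ := by
  intro h
  have hmem : x ∈ ⋂ r : ℝ, (F r : Set V) :=
    Set.mem_iInter.mpr fun r => mem_of_coe_lt_filtIndex hF (h ▸ EReal.coe_lt_top r)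
  exact hx (by simpa [hsep] using hmem)

lemma filtIndex_ne_bot (hexh : (⋃ r : ℝ, (F r : Set V)) = Set.univ) (x : V) :
    filtIndex F x ≠ ⊥ := by
  obtain ⟨r, hr⟩ := Set.mem_iUnion.mp (hexh ▸ Set.mem_univ x)
  exact ne_bot_of_le_ne_bot (EReal.coe_ne_bot r) (le_sSup ⟨r, hr, rfl⟩)

lemma le_toReal_filtIndex_iff (hF : Antitone F) (hsep : (⋂ r : ℝ, (F r : Set V)) = {0})
    (hexh : (⋃ r : ℝ, (F r : Set V)) = Set.univ) {x : V} (hx : x ≠ 0) (t : ℝ) :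
    t ≤ (filtIndex F x).toReal ↔ (t : EReal) ≤ filtIndex F x := by
  rw [← EReal.coe_le_coe_iff, EReal.coe_toReal (filtIndex_ne_top hF hsep hx)
    (filtIndex_ne_bot hexh x)]

end FiltIndex

section FiniteDimensional

variable {K V : Type*} [Field K] [AddCommGroup V] [Module K V] [FiniteDimensional K V]
  {F : ℝ → Submodule K V}

lemma finite_range_of_antitone (hF : Antitone F) : (Set.range F).Finite := by
  refine Set.Finite.of_finite_image (f := fun W : Submodule K V => finrank K W)
    ((Set.finite_Iic (finrank K V)).subset ?_) ?_
  · rintro _ ⟨W, -, rfl⟩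
    exact Submodule.finrank_le W
  · rintro _ ⟨r₁, rfl⟩ _ ⟨r₂, rfl⟩ h
    rcases le_total r₁ r₂ with hr | hr
    · exact (eq_of_le_of_finrank_eq (hF hr) h.symm).symm
    · exact eq_of_le_of_finrank_eq (hF hr) h

-- `filtIndex F x` only depends on which members of the finite family `range F` contain `x`.
lemma finite_range_filtIndex (hF : Antitone F) : (Set.range (filtIndex F)).Finite := by
  let g : Set (Submodule K V) → EReal := fun S => sSup ((↑) '' (F ⁻¹' S))
  refine ((finite_range_of_antitone hF).powerset.image g).subset ?_
  rintro _ ⟨x, rfl⟩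
  exact ⟨{W | x ∈ W} ∩ Set.range F, Set.inter_subset_right, by
    simp only [g, Set.preimage_inter_range]; rfl⟩

lemma exists_max_filtIndex (hF : Antitone F) {s : Set V} (hs : s.Nonempty) :
    ∃ x ∈ s, ∀ y ∈ s, filtIndex F y ≤ filtIndex F x := by
  have hfin : (filtIndex F '' s).Finite :=
    (finite_range_filtIndex hF).subset (Set.image_subset_range _ _)
  obtain ⟨x, hx, hmax⟩ := (hs.image _).csSup_mem hfin
  exact ⟨x, hx, fun y hy => hmax ▸ le_sSup ⟨y, hy, rfl⟩⟩

end FiniteDimensional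

section Counting

variable {α : Type*} [LinearOrder α] {n : ℕ}

lemma le_of_monotone_of_card_filter_le {a b : Fin n → α} (ha : Monotone a) (hb : Monotone b)
    (h : ∀ t, #{i | t ≤ a i} ≤ #{i | t ≤ b i}) (k : Fin n) : a k ≤ b k := by
  by_contra! hlt
  have hIci : Ici k ⊆ ({i | a k ≤ a i} : Finset (Fin n)) := fun i hi => by
    simpa using ha (mem_Ici.mp hi)
  have hIoi : ({i | a k ≤ b i} : Finset (Fin n)) ⊆ Ioi k := fun i hi => by
    simp only [mem_filter_univ] at hi
    exact mem_Ioi.mpr (lt_of_not_ge fun hik => (hb hik).not_gt (hlt.trans_le hi))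
  have := (card_le_card hIci).trans ((h (a k)).trans (card_le_card hIoi))
  rw [Fin.card_Ici, Fin.card_Ioi] at this
  omega

-- Sorting both tuples reduces the claim to a pointwise comparison.
lemma sum_le_sum_of_card_filter_le {M : Type*} [AddCommMonoid M] [PartialOrder M]
    [IsOrderedAddMonoid M] {a b : Fin n → α} (h : ∀ t, #{i | t ≤ a i} ≤ #{i | t ≤ b i})
    {f : α → M} (hf : Monotone f) : ∑ i, f (a i) ≤ ∑ i, f (b i) := by
  have card_comp_perm : ∀ (c : Fin n → α) (σ : Equiv.Perm (Fin n)) (t : α),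
      #{i | t ≤ c (σ i)} = #{i | t ≤ c i} := fun c σ t => card_equiv σ (by simp)
  have hsorted : ∀ k, a (Tuple.sort a k) ≤ b (Tuple.sort b k) :=
    le_of_monotone_of_card_filter_le (Tuple.monotone_sort a) (Tuple.monotone_sort b) fun t => by
      simpa only [Function.comp_apply, card_comp_perm] using h t
  calc ∑ i, f (a i) = ∑ k, f (a (Tuple.sort a k)) := (Equiv.sum_comp _ (f ∘ a)).symm
    _ ≤ ∑ k, f (b (Tuple.sort b k)) := sum_le_sum fun k _ => hf (hsorted k)
    _ = ∑ i, f (b i) := Equiv.sum_comp _ (f ∘ b)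

end Counting

lemma integral_smul_sum_dirac {n : ℕ} (a : Fin n → ℝ) (f : ℝ → ℝ) :
    ∫ x, f x ∂((n : ℝ≥0∞)⁻¹ • ∑ i, Measure.dirac (a i)) = (n : ℝ)⁻¹ * ∑ i, f (a i) := by
  rw [integral_smul_measure,
    integral_finsetSum_measure fun i _ => integrable_dirac (by simp)]
  simp [integral_dirac, ENNReal.toReal_inv]

lemma measureRightOf_smul_sum_dirac {n : ℕ} {a b : Fin n → ℝ}
    (h : ∀ t, #{i | t ≤ a i} ≤ #{i | t ≤ b i}) :
    MeasureRightOf ((n : ℝ≥0∞)⁻¹ • ∑ i, Measure.dirac (b i))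
      ((n : ℝ≥0∞)⁻¹ • ∑ i, Measure.dirac (a i)) := by
  intro f hf _
  rw [integral_smul_sum_dirac, integral_smul_sum_dirac]
  exact mul_le_mul_of_nonneg_left (sum_le_sum_of_card_filter_le h hf) (by positivity)

section Basis

variable {K V : Type*} [Field K] [AddCommGroup V] [Module K V] {F : ℝ → Submodule K V}
  {ι : Type*} [LinearOrder ι]

lemma inv_smul_sub_mem_span_Ioi (b : Basis ι K V) {x : V} {i : ι}
    (hi : IsLeast ((b.repr x).support : Set ι) i) :
    (b.repr x i)⁻¹ • x - b i ∈ span K (b '' Set.Ioi i) := by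
  have hxi : b.repr x i ≠ 0 := Finsupp.mem_support_iff.mp hi.1
  rw [b.mem_span_image]
  intro j hj
  rcases eq_or_ne j i with rfl | hji
  · simp [hxi] at hj
  · refine lt_of_le_of_ne (hi.2 (Finsupp.mem_support_iff.mpr fun h0 => ?_)) hji.symm
    simp [h0, hji.symm] at hj

lemma filtIndex_le_of_isLeast_support (b : Basis ι K V)
    (hmax : ∀ i w, w - b i ∈ span K (b '' Set.Ioi i) → filtIndex F w ≤ filtIndex F (b i))
    {x : V} {i : ι} (hi : IsLeast ((b.repr x).support : Set ι) i) :
    filtIndex F x ≤ filtIndex F (b i) := by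
  have hxi : b.repr x i ≠ 0 := Finsupp.mem_support_iff.mp hi.1
  rw [← filtIndex_smul F (inv_ne_zero hxi) x]
  exact hmax i _ (inv_smul_sub_mem_span_Ioi b hi)

lemma filtIndexGe_le_span (hF : Antitone F) (b : Basis ι K V)
    (hlead : ∀ x i, IsLeast ((b.repr x).support : Set ι) i →
      filtIndex F x ≤ filtIndex F (b i))
    (t : ℝ) : filtIndexGe F t ≤ span K (b '' {i | (t : EReal) ≤ filtIndex F (b i)}) := by
  classical
  intro x hx
  set S := {i | (t : EReal) ≤ filtIndex F (b i)}
  set p := (b.repr x).filter (· ∈ S)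
  have hp : b.repr.symm p ∈ span K (b '' S) := by
    rw [b.mem_span_image]
    intro i hi
    simp_all [p]
  have hS : span K (b '' S) ≤ filtIndexGe F t :=
    span_le.mpr (by rintro _ ⟨i, hi, rfl⟩; exact (mem_filtIndexGe_iff hF).mpr hi)
  -- The part `y` of `x` outside `span (b '' S)` still lies in `filtIndexGe F t`,
  -- so its leading index would lie in `S`.
  set y := x - b.repr.symm p
  have hy : y ∈ filtIndexGe F t := sub_mem hx (hS hp)
  have hyrepr : b.repr y = (b.repr x).filter (· ∉ S) := by
    simp only [y, p, map_sub, LinearEquiv.apply_symm_apply]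
    rw [sub_eq_iff_eq_add', Finsupp.filter_add_filter_not]
  suffices y = 0 by rwa [sub_eq_zero.mp this]
  by_contra hy0
  obtain ⟨i, hleast⟩ : ∃ i, IsLeast ((b.repr y).support : Set ι) i :=
    ⟨_, Finset.isLeast_min' _
      (Finsupp.support_nonempty_iff.mpr (b.repr.map_ne_zero_iff.mpr hy0))⟩
  have hin : i ∈ S := ((mem_filtIndexGe_iff hF).mp hy).trans (hlead y i hleast)
  have hout := hleast.1
  rw [Finset.mem_coe, hyrepr, Finsupp.support_filter, Finset.mem_filter] at hout
  exact hout.2 hin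

end Basis

section Dimension

variable {K V : Type*} [Field K] [AddCommGroup V] [Module K V] {F : ℝ → Submodule K V}
  {ι : Type*} [Fintype ι]

lemma card_filter_le_finrank_filtIndexGe (hF : Antitone F) (b : Basis ι K V) (t : ℝ) :
    #{i | (t : EReal) ≤ filtIndex F (b i)} ≤ finrank K (filtIndexGe F t) := by
  have := Module.Finite.of_basis b
  let S := {i // (t : EReal) ≤ filtIndex F (b i)}
  have hli : LinearIndependent K fun i : S => b i :=
    b.linearIndependent.comp _ Subtype.val_injective
  calc #{i | (t : EReal) ≤ filtIndex F (b i)} = Fintype.card S := (Fintype.card_subtype _).symm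
    _ = finrank K (span K (Set.range fun i : S => b i)) := (finrank_span_eq_card hli).symm
    _ ≤ finrank K (filtIndexGe F t) := Submodule.finrank_mono <| span_le.mpr <| by
      rintro _ ⟨i, rfl⟩
      exact (mem_filtIndexGe_iff hF).mpr i.2

lemma finrank_filtIndexGe_le_card (b : Basis ι K V) {t : ℝ}
    (h : filtIndexGe F t ≤ span K (b '' {i | (t : EReal) ≤ filtIndex F (b i)})) :
    finrank K (filtIndexGe F t) ≤ #{i | (t : EReal) ≤ filtIndex F (b i)} := by
  classical
  let S : Finset ι := {i | (t : EReal) ≤ filtIndex F (b i)}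
  calc finrank K (filtIndexGe F t) ≤ finrank K (span K (S.image b : Set V)) :=
        Submodule.finrank_mono (by simpa [S] using h)
    _ ≤ #(S.image b) := finrank_span_finset_le_card _
    _ ≤ #S := card_image_le

theorem maximalBasis_of_filtIndexGe_le_span (hF : Antitone F)
    (hsep : (⋂ r : ℝ, (F r : Set V)) = {0}) (hexh : (⋃ r : ℝ, (F r : Set V)) = Set.univ)
    {n : ℕ} (e : Basis (Fin n) K V)
    (h : ∀ t : ℝ, filtIndexGe F t ≤ span K (e '' {i | (t : EReal) ≤ filtIndex F (e i)})) :
    MaximalBasis F e := by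
  intro b
  refine measureRightOf_smul_sum_dirac fun t => ?_
  simp only [le_toReal_filtIndex_iff hF hsep hexh (b.ne_zero _),
    le_toReal_filtIndex_iff hF hsep hexh (e.ne_zero _)]
  exact (card_filter_le_finrank_filtIndexGe hF b t).trans (finrank_filtIndexGe_le_card e (h t))

end Dimension

section Unitriangular

variable {K V : Type*} [Field K] [AddCommGroup V] [Module K V] {n : ℕ}
  (e : Basis (Fin n) K V) {v : Fin n → V}

lemma repr_apply_eq_of_sub_mem_span_Ioi {i : Fin n} (hv : v i - e i ∈ span K (e '' Set.Ioi i))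
    {j : Fin n} (hji : j ≤ i) : e.repr (v i) j = e.repr (e i) j := by
  have hj : e.repr (v i - e i) j = 0 :=
    Finsupp.notMem_support_iff.mp fun hj => hji.not_gt (e.mem_span_image.mp hv hj)
  rwa [map_sub, Finsupp.sub_apply, sub_eq_zero] at hj

lemma span_image_Ioi_le (hv : ∀ i, v i - e i ∈ span K (e '' Set.Ioi i)) (i : Fin n) :
    span K (v '' Set.Ioi i) ≤ span K (e '' Set.Ioi i) := by
  refine span_le.mpr ?_
  rintro _ ⟨j, hij, rfl⟩
  have hej : e j ∈ span K (e '' Set.Ioi i) := subset_span ⟨j, hij, rfl⟩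
  have hvj : v j - e j ∈ span K (e '' Set.Ioi i) :=
    span_mono (Set.image_mono fun k (hjk : j < k) => (hij : i < j).trans hjk) (hv j)
  simpa using add_mem hvj hej

theorem exists_unitriangular_basis_eq (hv : ∀ i, v i - e i ∈ span K (e '' Set.Ioi i)) :
    ∃ A : Matrix (Fin n) (Fin n) K, A.BlockTriangular id ∧ (∀ i, A i i = 1) ∧
      ∃ e' : Basis (Fin n) K V, (∀ i, e' i = ∑ j, A i j • e j) ∧ ⇑e' = v := by
  let A : Matrix (Fin n) (Fin n) K := fun i j => e.repr (v i) j
  have htri : A.BlockTriangular id := fun i j (hji : j < i) => by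
    simp [A, repr_apply_eq_of_sub_mem_span_Ioi e (hv i) hji.le, hji.ne']
  have hdiag : ∀ i, A i i = 1 := fun i => by
    simp [A, repr_apply_eq_of_sub_mem_span_Ioi e (hv i) le_rfl]
  have hdet : IsUnit A.transpose.det := by
    rw [Matrix.det_transpose, Matrix.det_of_isUpperTriangular htri]
    simp [hdiag]
  let e' := e.map (Matrix.toLinearEquiv e A.transpose hdet)
  have he' : ∀ i, e' i = ∑ j, A i j • e j := fun i => by
    simp [e', Matrix.toLinearEquiv_apply, Matrix.toLin_self]
  refine ⟨A, htri, hdiag, e', he', funext fun i => ?_⟩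
  rw [he']
  exact e.sum_repr (v i)

end Unitriangular

theorem stmt_7_general {K V : Type*} [Field K] [AddCommGroup V] [Module K V] {n : ℕ}
    (F : ℝ → Submodule K V) (hF : Antitone F)
    (hsep : (⋂ r : ℝ, (F r : Set V)) = {0})
    (hexh : (⋃ r : ℝ, (F r : Set V)) = Set.univ)
    (e : Module.Basis (Fin n) K V) :
    ∃ A : Matrix (Fin n) (Fin n) K, A.BlockTriangular id ∧ (∀ i, A i i = 1) ∧
      ∃ e' : Module.Basis (Fin n) K V, (∀ i, e' i = ∑ j, A i j • e j) ∧ MaximalBasis F e' := by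
  have := Module.Finite.of_basis e
  choose v hv hvmax using fun i => exists_max_filtIndex hF
    (s := {w | w - e i ∈ span K (e '' Set.Ioi i)}) ⟨e i, by simp⟩
  obtain ⟨A, htri, hdiag, e', he', rfl⟩ := exists_unitriangular_basis_eq e hv
  have hmax : ∀ i w, w - e' i ∈ span K (e' '' Set.Ioi i) →
      filtIndex F w ≤ filtIndex F (e' i) :=
    fun i w hw => hvmax i w (by simpa using add_mem (span_image_Ioi_le e hv i hw) (hv i))
  refine ⟨A, htri, hdiag, e', he', maximalBasis_of_filtIndexGe_le_span hF hsep hexh e' ?_⟩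
  exact filtIndexGe_le_span hF e' fun _ _ => filtIndex_le_of_isLeast_support e' hmax

theorem stmt_7 {K V : Type*} [Field K] [AddCommGroup V] [Module K V] {n : ℕ}
    (hn : 0 < n) (F : ℝ → Submodule K V) (hF : Antitone F)
    (hsep : (⋂ r : ℝ, (F r : Set V)) = {0})
    (hexh : (⋃ r : ℝ, (F r : Set V)) = Set.univ)
    (e : Module.Basis (Fin n) K V) :
    ∃ A : Matrix (Fin n) (Fin n) K, A.BlockTriangular id ∧ (∀ i, A i i = 1) ∧
      ∃ e' : Module.Basis (Fin n) K V, (∀ i, e' i = ∑ j, A i j • e j) ∧ MaximalBasis F e' :=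
  stmt_7_general F hF hsep hexh e
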